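/- The real spherical harmonics Y_{l,m}, defined via associated Legendre functions with normalization Y_{l,m}(θ,φ) = sqrt((2−δ_{m,0})(2l+1)(l−m)!/(4π(l+m)!)) P_l^m(cos θ) cos(mφ) for m ≥ 0 and the analogous sine version for negative order, form an orthonormal family in L²(S²): ∫_{S²} Y_{l,m} Y_{p,q} dS = δ_{l,p} δ_{m,q}. -/

import Mathlib

open Real intervalIntegral

noncomputable def legendreP (l : ℕ) (x : ℝ) : ℝ :=
  (1 / (2 ^ l * (Nat.factorial l) : ℝ)) *
    iteratedDeriv l (fun y : ℝ => (y ^ 2 - 1) ^ l) x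

noncomputable def assocLegendre (l m : ℕ) (x : ℝ) : ℝ :=
  (-1 : ℝ) ^ m * (1 - x ^ 2) ^ ((m : ℝ) / 2) *
    iteratedDeriv m (legendreP l) x

noncomputable def sphHarmNorm (l : ℕ) (m : ℤ) : ℝ :=
  Real.sqrt ((2 - if m = 0 then 1 else 0) * (2 * l + 1) *
    (Nat.factorial (l - m.natAbs)) / (4 * π * (Nat.factorial (l + m.natAbs))))

noncomputable def sphHarm (l : ℕ) (m : ℤ) (θ φ : ℝ) : ℝ :=
  if 0 ≤ m then
    sphHarmNorm l m * assocLegendre l m.natAbs (Real.cos θ) * Real.cos (m * φ)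
  else
    sphHarmNorm l m * assocLegendre l m.natAbs (Real.cos θ) * Real.sin (m.natAbs * φ)

open Polynomial


-- polynomial functions are interval integrable
lemma polyII (f : ℝ[X]) (a b : ℝ) :
    IntervalIntegrable (fun x => f.eval x) MeasureTheory.volume a b :=
  (f.continuous_aeval).intervalIntegrable a b

-- FTC for polynomials
lemma integral_poly_deriv (f : ℝ[X]) (a b : ℝ) :
    ∫ x in a..b, (derivative f).eval x = f.eval b - f.eval a := by
  refine intervalIntegral.integral_eq_sub_of_hasDerivAt (fun x _ => f.hasDerivAt x) ?_
  exact polyII _ a b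

-- one step integration by parts for polynomials
lemma poly_parts (u v : ℝ[X]) (a b : ℝ) :
    ∫ x in a..b, u.eval x * (derivative v).eval x
      = u.eval b * v.eval b - u.eval a * v.eval a
        - ∫ x in a..b, (derivative u).eval x * v.eval x :=
  intervalIntegral.integral_mul_deriv_eq_deriv_mul
    (fun x _ => u.hasDerivAt x) (fun x _ => v.hasDerivAt x) (polyII _ a b) (polyII _ a b)

-- iterated integration by parts with vanishing boundary terms
lemma poly_parts_iter (n : ℕ) (u v : ℝ[X])
    (hb : ∀ k, k < n → ((derivative^[k] u).eval 1 * (derivative^[n-1-k] v).eval 1 = 0 ∧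
        (derivative^[k] u).eval (-1) * (derivative^[n-1-k] v).eval (-1) = 0)) :
    ∫ x in (-1:ℝ)..1, u.eval x * (derivative^[n] v).eval x
      = (-1 : ℝ)^n * ∫ x in (-1:ℝ)..1, (derivative^[n] u).eval x * v.eval x := by
  induction n generalizing v with
  | zero => simp
  | succ n ih =>
    have h1 : derivative^[n+1] v = derivative^[n] (derivative v) := by
      rw [Function.iterate_succ, Function.comp_apply]
    rw [h1, ih (derivative v) ?bnd]
    case bnd =>
      intro k hk
      have h2 : derivative^[n-1-k] (derivative v) = derivative^[(n+1)-1-k] v := by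
        rw [← Function.iterate_succ_apply]
        congr 1
        omega
      rw [h2]
      exact hb k (by omega)
    have h3 : ∫ x in (-1:ℝ)..1, (derivative^[n] u).eval x * (derivative v).eval x
        = - ∫ x in (-1:ℝ)..1, (derivative^[n+1] u).eval x * v.eval x := by
      rw [poly_parts]
      have hb1 := hb n (by omega)
      simp only [Nat.add_sub_cancel, Nat.sub_self, Function.iterate_zero, id] at hb1
      rw [hb1.1, hb1.2, Function.iterate_succ_apply']
      ring
    rw [h3]
    ring

-- divisibility survives derivative (losing one power)
lemma dvd_derivative_pow {f g : ℝ[X]} {i : ℕ} (hi : 1 ≤ i) (h : g ^ i ∣ f) :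
    g ^ (i - 1) ∣ derivative f := by
  obtain ⟨w, rfl⟩ := h
  rw [derivative_mul, derivative_pow]
  refine dvd_add (Dvd.dvd.mul_right ?_ w) ((pow_dvd_pow g (by omega)).mul_right _)
  exact Dvd.dvd.mul_right (dvd_mul_left _ _) _

lemma dvd_iterate_derivative {f g : ℝ[X]} {j k : ℕ} (hk : k ≤ j) (h : g ^ j ∣ f) :
    g ^ (j - k) ∣ derivative^[k] f := by
  induction k with
  | zero => simpa using h
  | succ k ih =>
    rw [Function.iterate_succ_apply']
    have := dvd_derivative_pow (i := j - k) (by omega) (ih (by omega))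
    simpa [show j - k - 1 = j - (k+1) by omega] using this

lemma eval_iterate_derivative_eq_zero {f : ℝ[X]} {j k : ℕ} {x : ℝ}
    (hk : k < j) (h : ((X : ℝ[X])^2 - 1) ^ j ∣ f) (hx : x ^ 2 - 1 = 0) :
    (derivative^[k] f).eval x = 0 := by
  obtain ⟨w, hw⟩ := dvd_iterate_derivative (le_of_lt hk) h
  rw [hw]
  simp only [eval_mul, eval_pow, eval_sub, eval_one, eval_X]
  rw [hx, zero_pow (by omega), zero_mul]

lemma contPow (l : ℕ) : Continuous fun x : ℝ => (1 - x^2)^l := by continuity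

lemma key_ftc (l : ℕ) :
    (2*(l:ℝ)+3) * ∫ x in (-1:ℝ)..1, (1-x^2)^(l+1)
      = (2*l+2) * ∫ x in (-1:ℝ)..1, (1-x^2)^l := by
  have hD : ∀ x : ℝ, HasDerivAt (fun y : ℝ => y * (1-y^2)^(l+1))
      ((2*(l:ℝ)+3) * (1-x^2)^(l+1) - (2*l+2) * (1-x^2)^l) x := by
    intro x
    have h1 : HasDerivAt (fun y : ℝ => 1 - y^2) (-(2*x)) x := by
      simpa using ((hasDerivAt_pow 2 x).const_sub 1)
    have h2 := h1.pow (l+1)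
    have h3 := (hasDerivAt_id x).mul h2
    refine h3.congr_deriv ?_
    have ha : ((1:ℝ) - x^2)^(l+1) = (1-x^2)^l * (1-x^2) := by ring
    push_cast
    rw [ha]
    simp only [id, Pi.pow_apply]
    ring
  have H : ∫ x in (-1:ℝ)..1,
      ((2*(l:ℝ)+3) * (1-x^2)^(l+1) - (2*l+2) * (1-x^2)^l) = 0 := by
    rw [intervalIntegral.integral_eq_sub_of_hasDerivAt (fun x _ => hD x)]
    · norm_num
    · apply Continuous.intervalIntegrable
      continuity
  rw [intervalIntegral.integral_sub, intervalIntegral.integral_const_mul,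
      intervalIntegral.integral_const_mul] at H
  · linarith
  · exact (Continuous.intervalIntegrable (by continuity) _ _)
  · exact (Continuous.intervalIntegrable (by continuity) _ _)

lemma integral_one_sub_sq_pow (l : ℕ) :
    ∫ x in (-1:ℝ)..1, (1-x^2)^l
      = 2^(2*l+1) * (l.factorial:ℝ)^2 / ((2*l+1).factorial) := by
  induction l with
  | zero => norm_num
  | succ l ih =>
    have h := key_ftc l
    rw [ih] at h
    have h3 : (0:ℝ) < 2*(l:ℝ)+3 := by positivity
    have e1 : (2*(l+1)+1) = (2*l+1)+2 := by ring
    rw [e1, Nat.factorial_succ, Nat.factorial_succ, Nat.factorial_succ]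
    have hf : ((2*l+1).factorial : ℝ) > 0 := by positivity
    field_simp at h
    push_cast at h ⊢
    rw [eq_div_iff (by positivity)]
    linear_combination (2*(l:ℝ)+2) * h

lemma int_cos (k : ℤ) : ∫ φ in (0:ℝ)..(2*π), Real.cos (k*φ)
    = if k = 0 then 2*π else 0 := by
  rcases eq_or_ne k 0 with hk | hk
  · simp [hk]
  · rw [if_neg hk]
    have h : ∫ φ in (0:ℝ)..(2*π), Real.cos ((k:ℝ)*φ)
        = (k:ℝ)⁻¹ • ∫ x in ((k:ℝ)*0)..((k:ℝ)*(2*π)), Real.cos x := by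
      rw [intervalIntegral.integral_comp_mul_left _ (by exact_mod_cast hk)]
    rw [h, integral_cos, mul_zero, Real.sin_zero]
    have : (k:ℝ) * (2*π) = (2*k : ℤ) * π := by push_cast; ring
    rw [this, Real.sin_int_mul_pi]
    simp

lemma int_sin (k : ℤ) : ∫ φ in (0:ℝ)..(2*π), Real.sin (k*φ) = 0 := by
  rcases eq_or_ne k 0 with hk | hk
  · simp [hk]
  · have h : ∫ φ in (0:ℝ)..(2*π), Real.sin ((k:ℝ)*φ)
        = (k:ℝ)⁻¹ • ∫ x in ((k:ℝ)*0)..((k:ℝ)*(2*π)), Real.sin x := by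
      rw [intervalIntegral.integral_comp_mul_left _ (by exact_mod_cast hk)]
    rw [h, integral_sin, mul_zero, Real.cos_zero]
    have : (k:ℝ) * (2*π) = (k : ℤ) * (2*π) := by push_cast; ring
    rw [this, Real.cos_int_mul_two_pi]
    simp

lemma int_cos_cos (a b : ℕ) : ∫ φ in (0:ℝ)..(2*π), Real.cos (a*φ) * Real.cos (b*φ)
    = if a = b then (if a = 0 then 2*π else π) else 0 := by
  have hpt : ∀ φ : ℝ, Real.cos (a*φ) * Real.cos (b*φ)
      = (Real.cos (((((a:ℤ)-(b:ℤ)):ℤ):ℝ)*φ) + Real.cos (((((a:ℤ)+(b:ℤ)):ℤ):ℝ)*φ))/2 := by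
    intro φ
    push_cast
    rw [show ((a:ℝ)-b)*φ = a*φ - b*φ by ring, show ((a:ℝ)+b)*φ = a*φ + b*φ by ring,
      Real.cos_sub, Real.cos_add]
    ring
  simp only [hpt]
  rw [intervalIntegral.integral_div, intervalIntegral.integral_add
    ((by continuity : Continuous fun x : ℝ => Real.cos (((((a:ℤ)-(b:ℤ)):ℤ):ℝ)*x)).intervalIntegrable _ _)
    ((by continuity : Continuous fun x : ℝ => Real.cos (((((a:ℤ)+(b:ℤ)):ℤ):ℝ)*x)).intervalIntegrable _ _),
    int_cos, int_cos]
  rcases eq_or_ne a b with h | h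
  · subst h
    rcases eq_or_ne a 0 with h0 | h0
    · subst h0; norm_num
    · have h1 : ((a:ℤ) - a = 0) := by omega
      have h2 : ¬((a:ℤ) + a = 0) := by omega
      simp only [h1, h2, if_true, if_false, if_pos, if_neg, eq_self_iff_true]
      rw [if_neg h0]
      ring
  · have h1 : ¬((a:ℤ) - b = 0) := by omega
    have h2 : ¬((a:ℤ) + b = 0) := by omega
    simp [h1, h2, h]

lemma int_sin_sin (a b : ℕ) : ∫ φ in (0:ℝ)..(2*π), Real.sin (a*φ) * Real.sin (b*φ)
    = if a = b ∧ a ≠ 0 then π else 0 := by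
  have hpt : ∀ φ : ℝ, Real.sin (a*φ) * Real.sin (b*φ)
      = (Real.cos (((((a:ℤ)-(b:ℤ)):ℤ):ℝ)*φ) - Real.cos (((((a:ℤ)+(b:ℤ)):ℤ):ℝ)*φ))/2 := by
    intro φ
    push_cast
    rw [show ((a:ℝ)-b)*φ = a*φ - b*φ by ring, show ((a:ℝ)+b)*φ = a*φ + b*φ by ring,
      Real.cos_sub, Real.cos_add]
    ring
  simp only [hpt]
  rw [intervalIntegral.integral_div, intervalIntegral.integral_sub
    ((by continuity : Continuous fun x : ℝ => Real.cos (((((a:ℤ)-(b:ℤ)):ℤ):ℝ)*x)).intervalIntegrable _ _)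
    ((by continuity : Continuous fun x : ℝ => Real.cos (((((a:ℤ)+(b:ℤ)):ℤ):ℝ)*x)).intervalIntegrable _ _),
    int_cos, int_cos]
  rcases eq_or_ne a b with h | h
  · subst h
    rcases eq_or_ne a 0 with h0 | h0
    · subst h0; norm_num
    · have h1 : ((a:ℤ) - a = 0) := by omega
      have h2 : ¬((a:ℤ) + a = 0) := by omega
      simp [h1, h2, h0]
  · have h1 : ¬((a:ℤ) - b = 0) := by omega
    have h2 : ¬((a:ℤ) + b = 0) := by omega
    simp [h1, h2, h]

lemma int_cos_sin (a b : ℕ) : ∫ φ in (0:ℝ)..(2*π), Real.cos (a*φ) * Real.sin (b*φ) = 0 := by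
  have hpt : ∀ φ : ℝ, Real.cos (a*φ) * Real.sin (b*φ)
      = (Real.sin (((((b:ℤ)+(a:ℤ)):ℤ):ℝ)*φ) + Real.sin (((((b:ℤ)-(a:ℤ)):ℤ):ℝ)*φ))/2 := by
    intro φ
    push_cast
    rw [show ((b:ℝ)+a)*φ = b*φ + a*φ by ring, show ((b:ℝ)-a)*φ = b*φ - a*φ by ring,
      Real.sin_sub, Real.sin_add]
    ring
  simp only [hpt]
  rw [intervalIntegral.integral_div, intervalIntegral.integral_add
    ((by continuity : Continuous fun x : ℝ => Real.sin (((((b:ℤ)+(a:ℤ)):ℤ):ℝ)*x)).intervalIntegrable _ _)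
    ((by continuity : Continuous fun x : ℝ => Real.sin (((((b:ℤ)-(a:ℤ)):ℤ):ℝ)*x)).intervalIntegrable _ _),
    int_sin, int_sin]
  norm_num

noncomputable def GG (l : ℕ) : ℝ[X] := ((X:ℝ[X])^2 - 1)^l
noncomputable def AA (l m : ℕ) : ℝ[X] := derivative^[l+m] (GG l)

lemma iteratedDeriv_polyeval (n : ℕ) (q : ℝ[X]) :
    iteratedDeriv n (fun x => q.eval x) = fun x => (derivative^[n] q).eval x := by
  induction n generalizing q with
  | zero => simp
  | succ n ih =>
    rw [iteratedDeriv_succ']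
    have h : deriv (fun x => q.eval x) = fun x => (derivative q).eval x :=
      funext fun x => (q.hasDerivAt x).deriv
    rw [h, ih]
    funext x
    rw [← Function.iterate_succ_apply]

lemma iteratedDeriv_legendreP (l m : ℕ) :
    iteratedDeriv m (legendreP l)
      = fun x => (1/(2^l * (Nat.factorial l)) : ℝ) * (AA l m).eval x := by
  have h : legendreP l
      = fun x => (C (1/(2^l * (Nat.factorial l)) : ℝ) * derivative^[l] (GG l)).eval x := by
    funext x
    unfold legendreP
    have h2 : (fun y : ℝ => (y^2-1)^l) = fun y => (GG l).eval y := by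
      funext y; simp [GG]
    rw [h2, iteratedDeriv_polyeval]
    simp
  rw [h, iteratedDeriv_polyeval]
  funext x
  rw [iterate_derivative_C_mul]
  have h3 : derivative^[m] (derivative^[l] (GG l)) = AA l m := by
    rw [← Function.iterate_add_apply, AA, Nat.add_comm]
  rw [h3]
  simp

lemma assoc_prod (l p m : ℕ) (θ : ℝ) :
    assocLegendre l m (Real.cos θ) * assocLegendre p m (Real.cos θ)
      = ((1/(2^l * (Nat.factorial l)) : ℝ) * (1/(2^p * (Nat.factorial p)) : ℝ)) *
        ((1 - (Real.cos θ)^2)^m *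
          ((AA l m).eval (Real.cos θ) * (AA p m).eval (Real.cos θ))) := by
  unfold assocLegendre
  rw [iteratedDeriv_legendreP, iteratedDeriv_legendreP]
  have hx : (0:ℝ) ≤ 1 - (Real.cos θ)^2 := by nlinarith [Real.cos_sq_le_one θ]
  have hr : ((1 - (Real.cos θ)^2) ^ ((m:ℝ)/2)) * ((1 - (Real.cos θ)^2) ^ ((m:ℝ)/2))
      = (1 - (Real.cos θ)^2)^m := by
    rw [← Real.rpow_add_of_nonneg hx (by positivity) (by positivity)]
    rw [show (m:ℝ)/2 + (m:ℝ)/2 = (m:ℝ) by ring, Real.rpow_natCast]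
  have hs : ((-1:ℝ)^m) * ((-1:ℝ)^m) = 1 := by
    rw [← pow_add]
    exact Even.neg_one_pow ⟨m, rfl⟩
  simp only []
  rw [show ∀ a b c d e f : ℝ, (a * b * (c * d)) * ((a * b) * (e * f))
      = (a*a) * (b*b) * ((c*e) * (d*f)) from fun a b c d e f => by ring] at *
  rw [hs, hr]
  ring

lemma natDegree_GG (l : ℕ) : (GG l).natDegree = 2 * l := by
  unfold GG
  rw [Polynomial.Monic.natDegree_pow]
  · rw [show ((X:ℝ[X])^2 - 1) = X^2 - C 1 by rw [C_1], natDegree_X_pow_sub_C]; ring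
  · have : ((X:ℝ[X])^2 - 1) = X^2 - C 1 := by rw [C_1]
    rw [this]
    exact monic_X_pow_sub_C 1 (by norm_num)

lemma monic_X_sq_sub_one : ((X:ℝ[X])^2 - 1).Monic := by
  have h : ((X:ℝ[X])^2 - 1) = X^2 - C 1 := by rw [C_1]
  rw [h]
  exact monic_X_pow_sub_C 1 (by norm_num)

lemma monic_GG (l : ℕ) : (GG l).Monic := monic_X_sq_sub_one.pow l

lemma natDegree_AA_le (l m : ℕ) : (AA l m).natDegree ≤ 2*l - (l+m) := by
  unfold AA
  calc (derivative^[l+m] (GG l)).natDegree ≤ (GG l).natDegree - (l+m) :=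
        natDegree_iterate_derivative _ _
    _ = 2*l - (l+m) := by rw [natDegree_GG]

lemma coeff_AA (l m : ℕ) (hm : m ≤ l) :
    (AA l m).coeff (l - m) = ((2*l).descFactorial (l+m) : ℝ) := by
  unfold AA
  rw [coeff_iterate_derivative]
  have h1 : l - m + (l + m) = 2*l := by omega
  rw [h1]
  have h2 : (GG l).coeff (2*l) = 1 := by
    have := (monic_GG l).leadingCoeff
    rwa [leadingCoeff, natDegree_GG] at this
  rw [h2]
  simp

lemma natDegree_AA (l m : ℕ) (hm : m ≤ l) : (AA l m).natDegree = l - m := by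
  refine le_antisymm (le_trans (natDegree_AA_le l m) (by omega)) ?_
  refine le_natDegree_of_ne_zero ?_
  rw [coeff_AA l m hm]
  have h0 : (2*l).descFactorial (l+m) ≠ 0 := by
    rw [Ne, Nat.descFactorial_eq_zero_iff_lt]
    omega
  exact_mod_cast h0

lemma one_sub_sq_eq : ((1:ℝ[X]) - X^2) = -(X^2 - C 1) := by rw [C_1]; ring

lemma natDegree_one_sub_sq : ((1:ℝ[X]) - X^2).natDegree = 2 := by
  rw [one_sub_sq_eq, natDegree_neg, natDegree_X_pow_sub_C]

lemma leadingCoeff_one_sub_sq : ((1:ℝ[X]) - X^2).leadingCoeff = -1 := by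
  rw [one_sub_sq_eq, leadingCoeff_neg, Monic.leadingCoeff (monic_X_pow_sub_C 1 (by norm_num))]

lemma one_sub_sq_ne_zero : ((1:ℝ[X]) - X^2) ≠ 0 := by
  intro h
  have := natDegree_one_sub_sq
  rw [h] at this
  simp at this

lemma natDegree_one_sub_sq_pow (m : ℕ) : (((1:ℝ[X]) - X^2)^m).natDegree = 2*m := by
  rw [natDegree_pow' ?h]
  · rw [natDegree_one_sub_sq]; ring
  case h =>
    rw [leadingCoeff_one_sub_sq]
    simp [pow_ne_zero]

lemma leadingCoeff_one_sub_sq_pow (m : ℕ) :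
    (((1:ℝ[X]) - X^2)^m).leadingCoeff = (-1:ℝ)^m := by
  rw [leadingCoeff_pow' ?h, leadingCoeff_one_sub_sq]
  case h =>
    rw [leadingCoeff_one_sub_sq]
    simp [pow_ne_zero]

lemma natDegree_B_le (l m : ℕ) (hm : m ≤ l) :
    (((1:ℝ[X]) - X^2)^m * AA l m).natDegree ≤ l + m := by
  refine le_trans (natDegree_mul_le) ?_
  have h1 := natDegree_AA_le l m
  rw [natDegree_one_sub_sq_pow]
  omega

lemma J_val (l p m : ℕ) (hm : m ≤ l) (hp : m ≤ p) (hlp : l ≤ p) :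
    ∫ x in (-1:ℝ)..1, (1-x^2)^m * ((AA l m).eval x * (AA p m).eval x)
      = if l = p then
          ((l+m).factorial : ℝ) * ((2*l).descFactorial (l+m)) * 2^(2*l+1) *
            (l.factorial:ℝ)^2 / ((2*l+1).factorial)
        else 0 := by
  set B : ℝ[X] := ((1:ℝ[X]) - X^2)^m * AA l m with hB
  have hint : ∀ x : ℝ, (1-x^2)^m * ((AA l m).eval x * (AA p m).eval x)
      = B.eval x * (derivative^[p+m] (GG p)).eval x := by
    intro x
    rw [hB]
    show _ = (eval x (((1:ℝ[X]) - X^2)^m * AA l m)) * eval x (AA p m)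
    simp only [eval_mul, eval_pow, eval_sub, eval_one, eval_X]
    ring
  simp only [hint]
  have hone : ((1:ℝ[X]) - X^2)^m = (-1:ℝ[X])^m * ((X:ℝ[X])^2-1)^m := by
    rw [← mul_pow]
    congr 1
    ring
  have hdvdB : ((X:ℝ[X])^2 - 1)^m ∣ B :=
    ⟨(-1:ℝ[X])^m * AA l m, by rw [hB, hone]; ring⟩
  have hdvdG : ((X:ℝ[X])^2 - 1)^p ∣ GG p := dvd_rfl
  rw [poly_parts_iter (p+m) B (GG p) ?bnd]
  case bnd =>
    intro k hk
    by_cases hkm : k < m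
    · have hz1 : (derivative^[k] B).eval 1 = 0 :=
        eval_iterate_derivative_eq_zero hkm hdvdB (by norm_num)
      have hz2 : (derivative^[k] B).eval (-1) = 0 :=
        eval_iterate_derivative_eq_zero hkm hdvdB (by norm_num)
      rw [hz1, hz2]
      simp
    · have hkp : p + m - 1 - k < p := by omega
      have hz1 : (derivative^[p+m-1-k] (GG p)).eval 1 = 0 :=
        eval_iterate_derivative_eq_zero hkp hdvdG (by norm_num)
      have hz2 : (derivative^[p+m-1-k] (GG p)).eval (-1) = 0 :=
        eval_iterate_derivative_eq_zero hkp hdvdG (by norm_num)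
      rw [hz1, hz2]
      simp
  rcases Nat.lt_or_ge l p with hlt | hge
  · have hz : derivative^[p+m] B = 0 :=
      iterate_derivative_eq_zero (lt_of_le_of_lt (natDegree_B_le l m hm) (by omega))
    rw [hz]
    simp [Nat.ne_of_lt hlt]
  · have hlp2 : l = p := by omega
    subst hlp2
    rw [if_pos rfl]
    have hd : derivative^[l+m] B = C (((l+m).factorial : ℝ) * B.coeff (l+m)) := by
      have hBd : B.natDegree ≤ l + m := by rw [hB]; exact natDegree_B_le l m hm
      have h1 : (derivative^[l+m] B).natDegree ≤ 0 := by
        refine le_trans (natDegree_iterate_derivative _ _) ?_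
        omega
      rw [eq_C_of_natDegree_le_zero h1, coeff_iterate_derivative]
      simp [Nat.descFactorial_self, mul_comm]
    have hco : B.coeff (l+m) = (-1:ℝ)^m * ((2*l).descFactorial (l+m)) := by
      have h2 := coeff_mul_degree_add_degree (((1:ℝ[X]) - X^2)^m) (AA l m)
      rw [natDegree_one_sub_sq_pow, natDegree_AA l m hm] at h2
      rw [show 2*m + (l-m) = l + m by omega] at h2
      rw [hB, h2, leadingCoeff_one_sub_sq_pow]
      congr 1
      rw [leadingCoeff, natDegree_AA l m hm, coeff_AA l m hm]
    have hGint : ∫ x in (-1:ℝ)..1, (GG l).eval x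
        = (-1:ℝ)^l * (2^(2*l+1) * (l.factorial:ℝ)^2 / ((2*l+1).factorial)) := by
      have hev : ∀ x : ℝ, (GG l).eval x = (-1:ℝ)^l * (1-x^2)^l := by
        intro x
        simp only [GG, eval_pow, eval_sub, eval_one, eval_X]
        rw [show (x^2-1:ℝ) = -(1-x^2) by ring, neg_pow]
      simp only [hev]
      rw [intervalIntegral.integral_const_mul, integral_one_sub_sq_pow]
    rw [hd]
    simp only [eval_C]
    rw [intervalIntegral.integral_const_mul, hGint, hco]
    have hsgn : (-1:ℝ)^(l+m) * ((-1:ℝ)^m * (-1:ℝ)^l) = 1 := by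
      rw [← pow_add, ← pow_add]
      exact Even.neg_one_pow ⟨l+m, by ring⟩
    linear_combination (((l+m).factorial : ℝ) * ((2*l).descFactorial (l+m)) *
      (2^(2*l+1) * (l.factorial:ℝ)^2 / ((2*l+1).factorial))) * hsgn

lemma J_val' (l p m : ℕ) (hm : m ≤ l) (hp : m ≤ p) :
    ∫ x in (-1:ℝ)..1, (1-x^2)^m * ((AA l m).eval x * (AA p m).eval x)
      = if l = p then
          ((l+m).factorial : ℝ) * ((2*l).descFactorial (l+m)) * 2^(2*l+1) *
            (l.factorial:ℝ)^2 / ((2*l+1).factorial)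
        else 0 := by
  rcases le_or_gt l p with h | h
  · exact J_val l p m hm hp h
  · have h2 := J_val p l m hp hm h.le
    have hcomm : ∀ x : ℝ, (1-x^2)^m * ((AA l m).eval x * (AA p m).eval x)
        = (1-x^2)^m * ((AA p m).eval x * (AA l m).eval x) := fun x => by ring
    simp only [hcomm]
    rw [h2, if_neg (by omega), if_neg (by omega)]

lemma cont_integrand (l p m : ℕ) :
    Continuous (fun x : ℝ => (1-x^2)^m * ((AA l m).eval x * (AA p m).eval x)) := by
  exact (contPow m).mul ((AA l m).continuous_aeval.mul (AA p m).continuous_aeval)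

lemma cos_change (F : ℝ → ℝ) (hF : Continuous F) :
    ∫ θ in (0:ℝ)..π, F (Real.cos θ) * Real.sin θ = ∫ x in (-1:ℝ)..1, F x := by
  have h := intervalIntegral.integral_comp_mul_deriv (f := Real.cos)
    (f' := fun θ => -Real.sin θ) (g := F) (a := 0) (b := π)
    (fun x _ => (Real.hasDerivAt_cos x)) (Real.continuous_sin.neg.continuousOn) hF
  rw [Real.cos_zero, Real.cos_pi] at h
  have h1 : ∫ θ in (0:ℝ)..π, (F ∘ Real.cos) θ * (-Real.sin θ)
      = - ∫ θ in (0:ℝ)..π, F (Real.cos θ) * Real.sin θ := by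
    rw [← intervalIntegral.integral_neg]
    congr 1
    funext θ
    simp [Function.comp]
  rw [h1, intervalIntegral.integral_symm (-1) 1] at h
  linarith

lemma theta_int (l p n : ℕ) (hn : n ≤ l) (hp : n ≤ p) :
    ∫ θ in (0:ℝ)..π,
        assocLegendre l n (Real.cos θ) * assocLegendre p n (Real.cos θ) * Real.sin θ
      = (1/(2^l * (l.factorial:ℝ))) * (1/(2^p * (p.factorial:ℝ))) *
        (if l = p then
          ((l+n).factorial : ℝ) * ((2*l).descFactorial (l+n)) * 2^(2*l+1) *
            (l.factorial:ℝ)^2 / ((2*l+1).factorial)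
        else 0) := by
  set K : ℝ := (1/(2^l * (l.factorial:ℝ))) * (1/(2^p * (p.factorial:ℝ))) with hK
  have hpt : ∀ θ : ℝ, assocLegendre l n (Real.cos θ) * assocLegendre p n (Real.cos θ)
        * Real.sin θ
      = K * ((fun x => (1-x^2)^n * ((AA l n).eval x * (AA p n).eval x)) (Real.cos θ)
          * Real.sin θ) := by
    intro θ
    rw [assoc_prod l p n θ, hK]
    ring
  simp only [hpt]
  rw [intervalIntegral.integral_const_mul, cos_change _ (cont_integrand l p n),
    J_val' l p n hn hp]

noncomputable def NR (l n : ℕ) : ℝ :=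
  Real.sqrt ((2 - if n = 0 then 1 else 0) * (2 * l + 1) *
    (Nat.factorial (l - n)) / (4 * π * (Nat.factorial (l + n))))

lemma sphHarmNorm_eq (l : ℕ) (m : ℤ) : sphHarmNorm l m = NR l m.natAbs := by
  unfold sphHarmNorm NR
  congr 3
  simp [Int.natAbs_eq_zero]

lemma diag (l p n : ℕ) (hn : n ≤ l) (hnp : n ≤ p) :
    (if n = 0 then 2*π else π) *
      ∫ θ in (0:ℝ)..π, (NR l n * assocLegendre l n (Real.cos θ)) *
        (NR p n * assocLegendre p n (Real.cos θ)) * Real.sin θ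
      = if l = p then 1 else 0 := by
  have hpt : ∀ θ : ℝ, (NR l n * assocLegendre l n (Real.cos θ)) *
        (NR p n * assocLegendre p n (Real.cos θ)) * Real.sin θ
      = (NR l n * NR p n) * (assocLegendre l n (Real.cos θ) *
          assocLegendre p n (Real.cos θ) * Real.sin θ) := fun θ => by ring
  simp only [hpt]
  rw [intervalIntegral.integral_const_mul, theta_int l p n hn hnp]
  rcases eq_or_ne l p with hlp | hlp
  · subst hlp
    rw [if_pos rfl, if_pos rfl]
    have hs : (0:ℝ) ≤ (2 - if n = 0 then 1 else 0) * (2 * l + 1) *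
        (Nat.factorial (l - n)) / (4 * π * (Nat.factorial (l + n))) := by
      have h2δ : (0:ℝ) ≤ 2 - (if n = 0 then 1 else 0) := by split <;> norm_num
      have hπ : (0:ℝ) < π := Real.pi_pos
      positivity
    have hNN : NR l n * NR l n = (2 - if n = 0 then 1 else 0) * (2 * l + 1) *
        (Nat.factorial (l - n)) / (4 * π * (Nat.factorial (l + n))) :=
      Real.mul_self_sqrt hs
    rw [hNN]
    have hfd : ((l-n).factorial : ℝ) * ((2*l).descFactorial (l+n)) = ((2*l).factorial : ℝ) := by
      have h := Nat.factorial_mul_descFactorial (by omega : l + n ≤ 2*l)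
      rw [show 2*l - (l+n) = l - n by omega] at h
      exact_mod_cast h
    have hf2 : ((2*l+1).factorial : ℝ) = (2*(l:ℝ)+1) * ((2*l).factorial) := by
      rw [Nat.factorial_succ]
      push_cast
      ring
    have hπ : (0:ℝ) < π := Real.pi_pos
    have hfl : (0:ℝ) < (l.factorial : ℝ) := by positivity
    have hfln : (0:ℝ) < ((l+n).factorial : ℝ) := by positivity
    have hflmn : (0:ℝ) < ((l-n).factorial : ℝ) := by positivity
    have hf2l : (0:ℝ) < ((2*l).factorial : ℝ) := by positivity
    have hD : (((2*l).descFactorial (l+n)) : ℝ)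
        = ((2*l).factorial : ℝ) / ((l-n).factorial : ℝ) := by
      rw [eq_div_iff (ne_of_gt hflmn)]
      linarith [hfd]
    have hpow : (2:ℝ)^(2*l+1) = 2 * (2^l) * (2^l) := by
      rw [show 2*l+1 = l + l + 1 by ring, pow_add, pow_add, pow_one]
      ring
    rw [hD, hf2, hpow]
    rcases eq_or_ne n 0 with hn0 | hn0
    · subst hn0
      simp only [if_pos rfl, ↓reduceIte]
      field_simp
      ring
    · simp only [if_neg hn0]
      field_simp
      ring
  · rw [if_neg hlp, if_neg hlp]
    ring


theorem sphHarm_orthonormal (l p : ℕ) (m q : ℤ)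
    (hm : m.natAbs ≤ l) (hq : q.natAbs ≤ p) :
    (∫ θ in (0:ℝ)..π, ∫ φ in (0:ℝ)..(2 * π),
        sphHarm l m θ φ * sphHarm p q θ φ * Real.sin θ)
      = if l = p ∧ m = q then 1 else 0 := by
  by_cases hm0 : 0 ≤ m <;> by_cases hq0 : 0 ≤ q
  · -- both nonneg : cosine * cosine
    have hc1 : ((m.natAbs : ℕ) : ℝ) = (m : ℝ) := by
      rw [Nat.cast_natAbs]; exact_mod_cast abs_of_nonneg hm0
    have hc2 : ((q.natAbs : ℕ) : ℝ) = (q : ℝ) := by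
      rw [Nat.cast_natAbs]; exact_mod_cast abs_of_nonneg hq0
    have inner : ∀ θ : ℝ, (∫ φ in (0:ℝ)..(2*π), sphHarm l m θ φ * sphHarm p q θ φ * Real.sin θ)
        = ((NR l m.natAbs * assocLegendre l m.natAbs (Real.cos θ)) *
           (NR p q.natAbs * assocLegendre p q.natAbs (Real.cos θ)) * Real.sin θ) *
          (if m.natAbs = q.natAbs then (if m.natAbs = 0 then 2*π else π) else 0) := by
      intro θ
      have hpt : ∀ φ : ℝ, sphHarm l m θ φ * sphHarm p q θ φ * Real.sin θ
          = ((NR l m.natAbs * assocLegendre l m.natAbs (Real.cos θ)) *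
             (NR p q.natAbs * assocLegendre p q.natAbs (Real.cos θ)) * Real.sin θ) *
            (Real.cos ((m.natAbs : ℕ) * φ) * Real.cos ((q.natAbs : ℕ) * φ)) := by
        intro φ
        unfold sphHarm
        rw [if_pos hm0, if_pos hq0, sphHarmNorm_eq, sphHarmNorm_eq, hc1, hc2]
        ring
      simp only [hpt]
      rw [intervalIntegral.integral_const_mul, int_cos_cos]
    simp only [inner]
    rcases eq_or_ne m q with hmq | hmq
    · subst hmq
      simp only [eq_self_iff_true, true_and, and_true, if_true, ite_true]
      rw [intervalIntegral.integral_mul_const]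
      linarith [diag l p m.natAbs hm hq]
    · have hab : m.natAbs ≠ q.natAbs := fun h => hmq (by omega)
      simp only [if_neg hab, mul_zero, intervalIntegral.integral_zero]
      rw [if_neg (fun h => hmq h.2)]
  · -- m nonneg, q neg : cosine * sine
    have inner : ∀ θ : ℝ, (∫ φ in (0:ℝ)..(2*π), sphHarm l m θ φ * sphHarm p q θ φ * Real.sin θ)
        = 0 := by
      intro θ
      have hpt : ∀ φ : ℝ, sphHarm l m θ φ * sphHarm p q θ φ * Real.sin θ
          = ((sphHarmNorm l m * assocLegendre l m.natAbs (Real.cos θ)) *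
             (sphHarmNorm p q * assocLegendre p q.natAbs (Real.cos θ)) * Real.sin θ) *
            (Real.cos ((m.natAbs : ℕ) * φ) * Real.sin ((q.natAbs : ℕ) * φ)) := by
        intro φ
        unfold sphHarm
        rw [if_pos hm0, if_neg hq0]
        have hc1 : ((m.natAbs : ℕ) : ℝ) = (m : ℝ) := by
          rw [Nat.cast_natAbs]; exact_mod_cast abs_of_nonneg hm0
        rw [hc1]
        ring
      simp only [hpt]
      rw [intervalIntegral.integral_const_mul, int_cos_sin, mul_zero]
    simp only [inner, intervalIntegral.integral_zero]
    rw [if_neg (fun h => by omega)]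
  · -- m neg, q nonneg : sine * cosine
    have inner : ∀ θ : ℝ, (∫ φ in (0:ℝ)..(2*π), sphHarm l m θ φ * sphHarm p q θ φ * Real.sin θ)
        = 0 := by
      intro θ
      have hpt : ∀ φ : ℝ, sphHarm l m θ φ * sphHarm p q θ φ * Real.sin θ
          = ((sphHarmNorm l m * assocLegendre l m.natAbs (Real.cos θ)) *
             (sphHarmNorm p q * assocLegendre p q.natAbs (Real.cos θ)) * Real.sin θ) *
            (Real.cos ((q.natAbs : ℕ) * φ) * Real.sin ((m.natAbs : ℕ) * φ)) := by
        intro φ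
        unfold sphHarm
        rw [if_neg hm0, if_pos hq0]
        have hc2 : ((q.natAbs : ℕ) : ℝ) = (q : ℝ) := by
          rw [Nat.cast_natAbs]; exact_mod_cast abs_of_nonneg hq0
        rw [hc2]
        ring
      simp only [hpt]
      rw [intervalIntegral.integral_const_mul, int_cos_sin, mul_zero]
    simp only [inner, intervalIntegral.integral_zero]
    rw [if_neg (fun h => by omega)]
  · -- both neg : sine * sine
    have inner : ∀ θ : ℝ, (∫ φ in (0:ℝ)..(2*π), sphHarm l m θ φ * sphHarm p q θ φ * Real.sin θ)
        = ((NR l m.natAbs * assocLegendre l m.natAbs (Real.cos θ)) *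
           (NR p q.natAbs * assocLegendre p q.natAbs (Real.cos θ)) * Real.sin θ) *
          (if m.natAbs = q.natAbs ∧ m.natAbs ≠ 0 then π else 0) := by
      intro θ
      have hpt : ∀ φ : ℝ, sphHarm l m θ φ * sphHarm p q θ φ * Real.sin θ
          = ((NR l m.natAbs * assocLegendre l m.natAbs (Real.cos θ)) *
             (NR p q.natAbs * assocLegendre p q.natAbs (Real.cos θ)) * Real.sin θ) *
            (Real.sin ((m.natAbs : ℕ) * φ) * Real.sin ((q.natAbs : ℕ) * φ)) := by
        intro φ
        unfold sphHarm
        rw [if_neg hm0, if_neg hq0, sphHarmNorm_eq, sphHarmNorm_eq]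
        ring
      simp only [hpt]
      rw [intervalIntegral.integral_const_mul, int_sin_sin]
    simp only [inner]
    rcases eq_or_ne m q with hmq | hmq
    · subst hmq
      have ha0 : m.natAbs ≠ 0 := by omega
      simp only [eq_self_iff_true, true_and, and_true, if_true, ite_true, ne_eq]
      rw [if_pos ha0]
      have hd := diag l p m.natAbs hm hq
      rw [if_neg ha0] at hd
      rw [intervalIntegral.integral_mul_const]
      linarith [hd]
    · have hab : ¬(m.natAbs = q.natAbs ∧ m.natAbs ≠ 0) := by
        rintro ⟨h1, _⟩
        exact hmq (by omega)
      simp only [if_neg hab, mul_zero, intervalIntegral.integral_zero]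
      rw [if_neg (fun h => hmq h.2)]
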